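/- arXiv:1407.2728 — 2 statements merged into one kernel-verified Lean document; each statement's English description precedes it below -/
import Mathlib

section
/- Let ν be a probability measure on the product space ℝ^ℕ that is invariant under the one-sided shift S, where S(ω)(n) = ω(n+1) for all n ∈ ℕ, let p ∈ (0, 1), and suppose ∫ |ω(0)|^p dν(ω) < ∞. Then for ν-almost every ω ∈ ℝ^ℕ, lim_{n→∞} (1/n^{1/p}) · Σ_{k=0}^{n-1} ω(k) = 0. -/
/-!
Truncate at level one: by stationarity and comparison with `∫₀^∞ min (x u^{-1/p}) 1 du`, the series
`∑ₖ min (|ω k| / (k+1)^{1/p}) 1` has expectation at most `E |ω 0|^p / (1 - p)`, so it converges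
almost surely. Its terms are then eventually below one, hence equal to `|ω k| / (k+1)^{1/p}`, and
dominated convergence for series turns the convergence of `∑ₖ |ω k| / (k+1)^{1/p}` into
`n^{-1/p} ∑_{k<n} ω k → 0`.
-/

open MeasureTheory ProbabilityTheory Filter Set Topology

theorem tendsto_one_div_rpow_mul_sum_range_of_summable {a : ℕ → ℝ} {r : ℝ} (hr : 0 < r)
    (h : Summable fun k => |a k| / ((k : ℝ) + 1) ^ r) :
    Tendsto (fun n : ℕ => 1 / (n : ℝ) ^ r * ∑ k ∈ Finset.range n, a k) atTop (𝓝 0) := by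
  set f : ℕ → ℕ → ℝ := fun n k => if k < n then a k / (n : ℝ) ^ r else 0
  have hsum_eq : ∀ n : ℕ, 1 / (n : ℝ) ^ r * ∑ k ∈ Finset.range n, a k = ∑' k, f n k := by
    intro n
    rw [tsum_eq_sum (s := Finset.range n) (fun k hk => if_neg (by simpa using hk)),
      Finset.mul_sum]
    refine Finset.sum_congr rfl fun k hk => ?_
    rw [if_pos (Finset.mem_range.1 hk)]
    ring
  have hpow : Tendsto (fun n : ℕ => (n : ℝ) ^ r) atTop atTop :=
    (tendsto_rpow_atTop hr).comp tendsto_natCast_atTop_atTop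
  have hlim : ∀ k, Tendsto (f · k) atTop (𝓝 0) := fun k =>
    (tendsto_const_nhds.div_atTop hpow).congr' <|
      (eventually_gt_atTop k).mono fun n hn => (if_pos hn).symm
  have hbound : ∀ n k, ‖f n k‖ ≤ |a k| / ((k : ℝ) + 1) ^ r := by
    intro n k
    by_cases hk : k < n
    · have hkn : (k : ℝ) + 1 ≤ n := by exact_mod_cast hk
      simp only [f, if_pos hk]
      rw [norm_div, Real.norm_of_nonneg (by positivity : (0 : ℝ) ≤ (n : ℝ) ^ r), Real.norm_eq_abs]
      gcongr
    · simp only [f, if_neg hk, norm_zero]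
      positivity
  simpa only [hsum_eq, tsum_zero] using
    tendsto_tsum_of_dominated_convergence h hlim (Eventually.of_forall hbound)

theorem summable_of_summable_min_one {t : ℕ → ℝ}
    (h : Summable fun k => min (t k) 1) : Summable t := by
  refine h.congr_atTop ?_
  filter_upwards [h.tendsto_atTop_zero.eventually (gt_mem_nhds one_pos)] with k hk
  exact min_eq_left (le_of_lt (by simpa [min_lt_iff] using hk))

theorem tsum_ofReal_le_setLIntegral_Ioi_of_antitoneOn {f : ℝ → ℝ} (hf : AntitoneOn f (Ioi 0)) :
    ∑' k : ℕ, ENNReal.ofReal (f ((k : ℝ) + 1)) ≤ ∫⁻ u in Ioi 0, ENNReal.ofReal (f u) := by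
  have hdisj : Pairwise (Function.onFun Disjoint fun k : ℕ => Ioc (k : ℝ) ((k : ℝ) + 1)) := by
    simpa using Nat.mono_cast.pairwise_disjoint_on_Ioc_succ (β := ℝ)
  have hpos : ∀ k : ℕ, Ioc (k : ℝ) ((k : ℝ) + 1) ⊆ Ioi 0 := fun k =>
    Ioc_subset_Ioi_self.trans (Ioi_subset_Ioi k.cast_nonneg)
  calc ∑' k : ℕ, ENNReal.ofReal (f ((k : ℝ) + 1))
      ≤ ∑' k : ℕ, ∫⁻ u in Ioc (k : ℝ) ((k : ℝ) + 1), ENNReal.ofReal (f u) := by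
        refine ENNReal.tsum_le_tsum fun k => ?_
        calc ENNReal.ofReal (f ((k : ℝ) + 1))
            = ∫⁻ _ in Ioc (k : ℝ) ((k : ℝ) + 1), ENNReal.ofReal (f ((k : ℝ) + 1)) := by
              simp [Real.volume_Ioc]
          _ ≤ ∫⁻ u in Ioc (k : ℝ) ((k : ℝ) + 1), ENNReal.ofReal (f u) :=
              setLIntegral_mono' measurableSet_Ioc fun u hu => ENNReal.ofReal_le_ofReal <|
                hf (hpos k hu) (hpos k (right_mem_Ioc.2 (lt_add_one _))) hu.2
    _ = ∫⁻ u in ⋃ k : ℕ, Ioc (k : ℝ) ((k : ℝ) + 1), ENNReal.ofReal (f u) :=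
        (lintegral_iUnion (fun _ => measurableSet_Ioc) hdisj _).symm
    _ ≤ ∫⁻ u in Ioi 0, ENNReal.ofReal (f u) := lintegral_mono_set (iUnion_subset hpos)

theorem setLIntegral_Ioi_min_div_rpow_le {p x : ℝ} (hp0 : 0 < p) (hp1 : p < 1) (hx : 0 < x) :
    ∫⁻ u in Ioi 0, ENNReal.ofReal (min (x / u ^ (1 / p)) 1) ≤ ENNReal.ofReal (x ^ p / (1 - p)) := by
  have hxp : 0 < x ^ p := Real.rpow_pos_of_pos hx p
  have h1p : 0 < 1 - p := sub_pos.2 hp1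
  have hexp : -(1 / p) < -1 := by
    rw [neg_lt_neg_iff, lt_div_iff₀ hp0]; linarith
  have hsmall : ∫⁻ u in Ioc 0 (x ^ p), ENNReal.ofReal (min (x / u ^ (1 / p)) 1)
      ≤ ENNReal.ofReal (x ^ p) :=
    calc _ ≤ ∫⁻ _ in Ioc 0 (x ^ p), 1 :=
          setLIntegral_mono' measurableSet_Ioc fun u _ => ENNReal.ofReal_le_one.2 (min_le_right _ _)
      _ = ENNReal.ofReal (x ^ p) := by simp [Real.volume_Ioc]
  have hlarge : ∫⁻ u in Ioi (x ^ p), ENNReal.ofReal (min (x / u ^ (1 / p)) 1)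
      ≤ ENNReal.ofReal (x * -(x ^ p) ^ (-(1 / p) + 1) / (-(1 / p) + 1)) :=
    calc _ ≤ ∫⁻ u in Ioi (x ^ p), ENNReal.ofReal (x * u ^ (-(1 / p))) := by
          refine setLIntegral_mono' measurableSet_Ioi fun u hu => ENNReal.ofReal_le_ofReal ?_
          rw [Real.rpow_neg (hxp.trans hu).le, ← div_eq_mul_inv]
          exact min_le_left _ _
      _ = ENNReal.ofReal (∫ u in Ioi (x ^ p), x * u ^ (-(1 / p))) := by
          refine (ofReal_integral_eq_lintegral_ofReal
            ((integrableOn_Ioi_rpow_of_lt hexp hxp).const_mul x) ?_).symm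
          filter_upwards [ae_restrict_mem measurableSet_Ioi] with u hu
          exact mul_nonneg hx.le (Real.rpow_nonneg (hxp.trans hu).le _)
      _ = _ := by rw [integral_const_mul, integral_Ioi_rpow_of_lt hexp hxp, mul_div_assoc]
  have hcalc : x * -(x ^ p) ^ (-(1 / p) + 1) / (-(1 / p) + 1) = p / (1 - p) * x ^ p := by
    have hp : p * (-(1 / p) + 1) = p - 1 := by field_simp; ring
    have hq : -(1 / p) + 1 = -((1 - p) / p) := by field_simp; ring
    rw [← Real.rpow_mul hx.le, hp, Real.rpow_sub_one hx.ne', hq]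
    field_simp
  rw [← Ioc_union_Ioi_eq_Ioi hxp.le, lintegral_union measurableSet_Ioi (Ioc_disjoint_Ioi le_rfl)]
  calc _ ≤ ENNReal.ofReal (x ^ p) + ENNReal.ofReal (p / (1 - p) * x ^ p) :=
        add_le_add hsmall (hcalc ▸ hlarge)
    _ = ENNReal.ofReal (x ^ p / (1 - p)) := by
        rw [← ENNReal.ofReal_add hxp.le (by positivity)]
        congr 1
        field_simp
        ring

theorem tsum_ofReal_min_div_rpow_le {p x : ℝ} (hp0 : 0 < p) (hp1 : p < 1) (hx : 0 ≤ x) :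
    ∑' k : ℕ, ENNReal.ofReal (min (x / ((k : ℝ) + 1) ^ (1 / p)) 1)
      ≤ ENNReal.ofReal (x ^ p / (1 - p)) := by
  rcases hx.eq_or_lt with rfl | hx
  · simp
  refine (tsum_ofReal_le_setLIntegral_Ioi_of_antitoneOn fun u hu v _ huv => ?_).trans
    (setLIntegral_Ioi_min_div_rpow_le hp0 hp1 hx)
  have : 0 < u := hu
  gcongr

theorem identDistrib_eval_of_measurePreserving_shift {α : Type*} [MeasurableSpace α]
    {ν : Measure (ℕ → α)} (hshift : MeasurePreserving (fun (ω : ℕ → α) (n : ℕ) => ω (n + 1)) ν ν)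
    (k : ℕ) : IdentDistrib (fun ω : ℕ → α => ω k) (fun ω => ω 0) ν ν := by
  set S := fun (ω : ℕ → α) (n : ℕ) => ω (n + 1)
  have hiter : ∀ ω : ℕ → α, (S^[k] ω) 0 = ω k := by
    intro ω
    induction k generalizing ω with
    | zero => rfl
    | succ k ih => rw [Function.iterate_succ_apply, ih]
  refine ⟨(measurable_pi_apply k).aemeasurable, (measurable_pi_apply 0).aemeasurable, ?_⟩
  calc ν.map (fun ω => ω k) = ν.map ((fun ω : ℕ → α => ω 0) ∘ S^[k]) := by
        simp only [Function.comp_def, hiter]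
    _ = (ν.map S^[k]).map (fun ω => ω 0) :=
      (Measure.map_map (measurable_pi_apply 0) (hshift.iterate k).measurable).symm
    _ = ν.map (fun ω => ω 0) := by rw [(hshift.iterate k).map_eq]

theorem ae_summable_abs_div_rpow_of_identDistrib {Ω : Type*} [MeasurableSpace Ω]
    {μ : Measure Ω} {X : ℕ → Ω → ℝ} (hX : ∀ k, IdentDistrib (X k) (X 0) μ μ) {p : ℝ}
    (hp0 : 0 < p) (hp1 : p < 1) (hint : Integrable (fun ω => |X 0 ω| ^ p) μ) :
    ∀ᵐ ω ∂μ, Summable fun k => |X k ω| / ((k : ℝ) + 1) ^ (1 / p) := by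
  set c : ℕ → ℝ → ℝ := fun k y => min (|y| / ((k : ℝ) + 1) ^ (1 / p)) 1
  have hc : ∀ k, Measurable fun y => ENNReal.ofReal (c k y) := fun k =>
    ((measurable_abs.div_const _).min measurable_const).ennreal_ofReal
  have hmeas : ∀ k, AEMeasurable (fun ω => ENNReal.ofReal (c k (X k ω))) μ := fun k =>
    (hc k).comp_aemeasurable (hX k).aemeasurable_fst
  have hfin : ∫⁻ ω, ∑' k, ENNReal.ofReal (c k (X k ω)) ∂μ < ⊤ := by
    rw [lintegral_tsum hmeas]
    calc ∑' k, ∫⁻ ω, ENNReal.ofReal (c k (X k ω)) ∂μ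
        = ∑' k, ∫⁻ ω, ENNReal.ofReal (c k (X 0 ω)) ∂μ :=
          tsum_congr fun k => ((hX k).comp (hc k)).lintegral_eq
      _ = ∫⁻ ω, ∑' k, ENNReal.ofReal (c k (X 0 ω)) ∂μ :=
          (lintegral_tsum fun k => (hc k).comp_aemeasurable (hX 0).aemeasurable_fst).symm
      _ ≤ ∫⁻ ω, ENNReal.ofReal (|X 0 ω| ^ p / (1 - p)) ∂μ :=
          lintegral_mono fun ω => tsum_ofReal_min_div_rpow_le hp0 hp1 (abs_nonneg _)
      _ < ⊤ := (hint.div_const (1 - p)).lintegral_lt_top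
  filter_upwards [ae_lt_top' (AEMeasurable.tsum hmeas) hfin.ne] with ω hω
  refine summable_of_summable_min_one ((ENNReal.summable_toReal hω.ne).congr fun k => ?_)
  exact ENNReal.toReal_ofReal (le_min (by positivity) zero_le_one)

theorem stmt_1_general (ν : Measure (ℕ → ℝ))
    (hshift : MeasurePreserving (fun (ω : ℕ → ℝ) (n : ℕ) => ω (n + 1)) ν ν)
    (p : ℝ) (hp : p ∈ Set.Ioo (0 : ℝ) 1)
    (hint : Integrable (fun ω : ℕ → ℝ => |ω 0| ^ p) ν) :
    ∀ᵐ ω ∂ν, Tendsto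
      (fun n : ℕ => (1 / (n : ℝ) ^ (1 / p)) * ∑ k ∈ Finset.range n, ω k)
      atTop (nhds 0) := by
  obtain ⟨hp0, hp1⟩ := hp
  filter_upwards [ae_summable_abs_div_rpow_of_identDistrib
    (identDistrib_eval_of_measurePreserving_shift hshift) hp0 hp1 hint] with ω hω
  exact tendsto_one_div_rpow_mul_sum_range_of_summable (one_div_pos.2 hp0) hω

/-- MZ-type SLLN on path space: if `ν` is a shift-invariant probability measure on `ℕ → ℝ`
with `∫ |ω 0|^p dν < ∞` for some `p ∈ (0,1)`, then `n^{-1/p} ∑_{k<n} ω k → 0` ν-a.s. -/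
theorem stmt_1 (ν : Measure (ℕ → ℝ)) [IsProbabilityMeasure ν]
    (hshift : MeasurePreserving (fun (ω : ℕ → ℝ) (n : ℕ) => ω (n + 1)) ν ν)
    (p : ℝ) (hp : p ∈ Set.Ioo (0 : ℝ) 1)
    (hint : Integrable (fun ω : ℕ → ℝ => |ω 0| ^ p) ν) :
    ∀ᵐ ω ∂ν, Tendsto
      (fun n : ℕ => (1 / (n : ℝ) ^ (1 / p)) * ∑ k ∈ Finset.range n, ω k)
      atTop (nhds 0) :=
  stmt_1_general ν hshift p hp hint
end

section
/- Let p ∈ (0, 1) and let X be a nonnegative real-valued random variable with E[X^p] < ∞. Then (1/n^{1/p}) · Σ_{k=1}^{n} E[X · 1_{{X ≤ k^{1/p}}}] → 0 as n → ∞. -/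
/-!
Put `M = n^{1/p}`. Each summand is at most the last one, so the normalized sum is at most
`n^{1-1/p} ∫_{X ≤ M} X = M^{p-1} ∫_{X ≤ M} X`. On `{X ≤ M}` one has `M^{p-1} X ≤ X^p`, an integrable bound
independent of `M`, and the integrand tends to `0` pointwise as `M → ∞` because `p < 1`;
dominated convergence finishes.
-/

open MeasureTheory Filter

namespace Real

theorem le_rpow_one_sub_mul_rpow {x M p : ℝ} (hx : 0 ≤ x) (hxM : x ≤ M) (hp : p ≤ 1) :
    x ≤ M ^ (1 - p) * x ^ p :=
  calc x = x ^ (1 - p) * x ^ p := by rw [← rpow_add' hx (by norm_num), sub_add_cancel, rpow_one]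
    _ ≤ M ^ (1 - p) * x ^ p := by gcongr

end Real

section Truncation

variable {Ω : Type*} [MeasurableSpace Ω] {μ : Measure Ω} {p : ℝ} {X : Ω → ℝ}

theorem integrableOn_setOf_le_of_integrable_rpow (hp : p ≤ 1) (hmeas : Measurable X)
    (hX : ∀ ω, 0 ≤ X ω) (hint : Integrable (fun ω => X ω ^ p) μ) (M : ℝ) :
    IntegrableOn X {ω | X ω ≤ M} μ := by
  refine Integrable.mono' (hint.const_mul (M ^ (1 - p))).integrableOn
    hmeas.aestronglyMeasurable.restrict ?_
  refine ae_restrict_of_forall_mem (measurableSet_le hmeas measurable_const) fun ω hω => ?_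
  rw [Real.norm_of_nonneg (hX ω)]
  exact Real.le_rpow_one_sub_mul_rpow (hX ω) hω hp

theorem monotone_setIntegral_setOf_le (hp : p ≤ 1) (hmeas : Measurable X)
    (hX : ∀ ω, 0 ≤ X ω) (hint : Integrable (fun ω => X ω ^ p) μ) :
    Monotone fun M : ℝ => ∫ ω in {ω | X ω ≤ M}, X ω ∂μ := fun M N h =>
  setIntegral_mono_set (integrableOn_setOf_le_of_integrable_rpow hp hmeas hX hint N)
    (ae_of_all _ hX) (ae_of_all _ fun ω (hω : X ω ≤ M) => hω.trans h)

theorem tendsto_rpow_sub_one_mul_setIntegral_le (hp : p < 1) (hmeas : Measurable X)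
    (hX : ∀ ω, 0 ≤ X ω) (hint : Integrable (fun ω => X ω ^ p) μ) :
    Tendsto (fun M : ℝ => M ^ (p - 1) * ∫ ω in {ω | X ω ≤ M}, X ω ∂μ) atTop (nhds 0) := by
  have hset (M : ℝ) : MeasurableSet {ω | X ω ≤ M} := measurableSet_le hmeas measurable_const
  have hrpow : Tendsto (fun M : ℝ => M ^ (p - 1)) atTop (nhds 0) := by
    simpa using tendsto_rpow_neg_atTop (y := 1 - p) (by linarith)
  simp_rw [← integral_const_mul, ← integral_indicator (hset _)]
  have hdom : ∀ᶠ M : ℝ in atTop, ∀ᵐ ω ∂μ,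
      ‖{ω | X ω ≤ M}.indicator (fun ω => M ^ (p - 1) * X ω) ω‖ ≤ X ω ^ p := by
    filter_upwards [eventually_gt_atTop 0] with M hM
    refine ae_of_all _ fun ω => ?_
    rw [Set.indicator_apply]
    split_ifs with hω
    · rw [Real.norm_of_nonneg (mul_nonneg (Real.rpow_nonneg hM.le _) (hX ω))]
      calc M ^ (p - 1) * X ω ≤ M ^ (p - 1) * (M ^ (1 - p) * X ω ^ p) := by
            gcongr
            exact Real.le_rpow_one_sub_mul_rpow (hX ω) hω hp.le
        _ = X ω ^ p := by rw [← mul_assoc, ← Real.rpow_add hM]; simp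
    · simpa using Real.rpow_nonneg (hX ω) p
  have hlim : ∀ ω, Tendsto (fun M : ℝ => {ω | X ω ≤ M}.indicator
      (fun ω => M ^ (p - 1) * X ω) ω) atTop (nhds 0) := fun ω => by
    refine (zero_mul (X ω) ▸ hrpow.mul_const (X ω)).congr' ?_
    filter_upwards [eventually_ge_atTop (X ω)] with M hM
    exact (Set.indicator_of_mem (s := {ω | X ω ≤ M}) hM (fun ω => M ^ (p - 1) * X ω)).symm
  simpa using tendsto_integral_filter_of_dominated_convergence (f := fun _ => (0 : ℝ)) _
    (Eventually.of_forall fun M =>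
      ((hmeas.const_mul _).indicator (hset M)).aestronglyMeasurable)
    hdom hint (ae_of_all _ hlim)

end Truncation

theorem one_div_rpow_mul_sum_le_of_monotone {T : ℝ → ℝ} (hT : Monotone T) {p : ℝ} (hp : 0 < p)
    {n : ℕ} (hn : 0 < n) :
    1 / (n : ℝ) ^ (1 / p) * ∑ k ∈ Finset.Icc 1 n, T ((k : ℝ) ^ (1 / p)) ≤
      ((n : ℝ) ^ (1 / p)) ^ (p - 1) * T ((n : ℝ) ^ (1 / p)) := by
  have hn' : (0 : ℝ) < n := Nat.cast_pos.mpr hn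
  have hsum := Finset.sum_le_card_nsmul (Finset.Icc 1 n) (fun k : ℕ => T ((k : ℝ) ^ (1 / p))) _
    fun k hk => hT (Real.rpow_le_rpow (Nat.cast_nonneg k)
      (Nat.cast_le.mpr (Finset.mem_Icc.mp hk).2) (one_div_pos.mpr hp).le)
  rw [Nat.card_Icc, Nat.add_sub_cancel, nsmul_eq_mul] at hsum
  calc _ ≤ 1 / (n : ℝ) ^ (1 / p) * (n * T ((n : ℝ) ^ (1 / p))) := by gcongr
    _ = _ := by
      rw [← Real.rpow_mul hn'.le, ← mul_assoc, mul_sub, mul_one, one_div_mul_cancel hp.ne',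
        Real.rpow_sub hn', Real.rpow_one, one_div_mul_eq_div]

theorem stmt_3_general {Ω : Type*} [MeasurableSpace Ω] (P : Measure Ω)
    (p : ℝ) (hp : p ∈ Set.Ioo (0 : ℝ) 1)
    (X : Ω → ℝ) (hmeas : Measurable X) (hX : ∀ ω, 0 ≤ X ω)
    (hint : Integrable (fun ω => X ω ^ p) P) :
    Tendsto
      (fun n : ℕ => (1 / (n : ℝ) ^ (1 / p)) *
        ∑ k ∈ Finset.Icc 1 n, ∫ ω in {ω | X ω ≤ (k : ℝ) ^ (1 / p)}, X ω ∂P)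
      atTop (nhds 0) := by
  obtain ⟨hp0, hp1⟩ := hp
  have hbound : ∀ᶠ n : ℕ in atTop,
      (1 / (n : ℝ) ^ (1 / p)) *
        ∑ k ∈ Finset.Icc 1 n, ∫ ω in {ω | X ω ≤ (k : ℝ) ^ (1 / p)}, X ω ∂P ≤
      ((n : ℝ) ^ (1 / p)) ^ (p - 1) * ∫ ω in {ω | X ω ≤ (n : ℝ) ^ (1 / p)}, X ω ∂P :=
    eventually_gt_atTop 0 |>.mono fun n hn => one_div_rpow_mul_sum_le_of_monotone
      (monotone_setIntegral_setOf_le hp1.le hmeas hX hint) hp0 hn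
  have hlim := (tendsto_rpow_sub_one_mul_setIntegral_le hp1 hmeas hX hint).comp
    ((tendsto_rpow_atTop (one_div_pos.mpr hp0)).comp tendsto_natCast_atTop_atTop)
  have hnonneg (n : ℕ) : 0 ≤ (1 / (n : ℝ) ^ (1 / p)) *
      ∑ k ∈ Finset.Icc 1 n, ∫ ω in {ω | X ω ≤ (k : ℝ) ^ (1 / p)}, X ω ∂P :=
    mul_nonneg (by positivity) <| Finset.sum_nonneg fun k _ =>
      setIntegral_nonneg (measurableSet_le hmeas measurable_const) fun ω _ => hX ω
  exact squeeze_zero' (.of_forall hnonneg) hbound hlim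

/-- Truncation estimate: for a nonnegative random variable `X` with `E[X^p] < ∞`,
`p ∈ (0,1)`, one has `n^{-1/p} ∑_{k=1}^n E[X · 1_{X ≤ k^{1/p}}] → 0`. -/
theorem stmt_3 {Ω : Type*} [MeasurableSpace Ω] (P : Measure Ω) [IsProbabilityMeasure P]
    (p : ℝ) (hp : p ∈ Set.Ioo (0 : ℝ) 1)
    (X : Ω → ℝ) (hmeas : Measurable X) (hX : ∀ ω, 0 ≤ X ω)
    (hint : Integrable (fun ω => X ω ^ p) P) :
    Tendsto
      (fun n : ℕ => (1 / (n : ℝ) ^ (1 / p)) *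
        ∑ k ∈ Finset.Icc 1 n, ∫ ω in {ω | X ω ≤ (k : ℝ) ^ (1 / p)}, X ω ∂P)
      atTop (nhds 0) :=
  stmt_3_general P p hp X hmeas hX hint
end
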